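/- arXiv:1410.0939 — 2 statements merged into one kernel-verified Lean document; each statement's English description precedes it below -/
import Mathlib

section
/- For every x ∈ (0, 2π), the series Σ_{j=1}^∞ sin(jx)/j converges and Σ_{j=1}^∞ sin(jx)/j = (π − x)/2. -/
open Filter Finset
open scoped Topology Real

/-!
For `‖z‖ ≤ 1`, `z ≠ 1`, the partial sums of `∑ zⁿ` are bounded by `2 / ‖1 - z‖`, so Dirichlet's
test makes `∑ zⁿ / n` converge; by Abel's limit theorem its sum is the radial limit of
`-log (1 - r z)`, i.e. `-log (1 - z)`, since `1 - z` lies in the slit plane where `log` is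
continuous. For `z = e^{ix}` the imaginary part of the terms is `sin (n x) / n`, and
`1 - e^{ix} = 2 sin (x/2) e^{i(x - π)/2}` with `2 sin (x/2) > 0` gives
`Im (-log (1 - e^{ix})) = -arg (1 - e^{ix}) = (π - x) / 2`.
-/

namespace Real

lemma sin_half_pos {x : ℝ} (hx : x ∈ Set.Ioo 0 (2 * π)) : 0 < sin (x / 2) :=
  sin_pos_of_pos_of_lt_pi (by linarith [hx.1]) (by linarith [hx.2])

end Real

namespace Complex

lemma one_sub_mem_slitPlane {z : ℂ} (hz : ‖z‖ ≤ 1) (hz1 : z ≠ 1) : 1 - z ∈ slitPlane := by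
  have hre : z.re ≤ 1 := (re_le_norm z).trans hz
  refine mem_slitPlane_iff.2 (Or.inl ?_)
  rw [sub_re, one_re, sub_pos]
  refine hre.lt_of_ne fun h ↦ hz1 (ext h ?_)
  exact abs_re_eq_norm.1 (le_antisymm (abs_re_le_norm z) (by rw [h, abs_one]; exact hz))

lemma norm_sum_range_pow_succ_le {z : ℂ} (hz : ‖z‖ ≤ 1) (hz1 : z ≠ 1) (n : ℕ) :
    ‖∑ i ∈ range n, z ^ (i + 1)‖ ≤ 2 / ‖1 - z‖ := by
  have hsub : 0 < ‖1 - z‖ := norm_pos_iff.2 (sub_ne_zero.2 hz1.symm)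
  calc ‖∑ i ∈ range n, z ^ (i + 1)‖ = ‖z‖ * (‖z ^ n - 1‖ / ‖1 - z‖) := by
        simp_rw [pow_succ', ← mul_sum, geom_sum_eq hz1, norm_mul, norm_div, norm_sub_rev z]
    _ ≤ 1 * ((1 + 1) / ‖1 - z‖) := by
        gcongr
        calc ‖z ^ n - 1‖ ≤ ‖z ^ n‖ + ‖(1 : ℂ)‖ := norm_sub_le _ _
          _ ≤ 1 + 1 := by rw [norm_pow, norm_one]; gcongr; exact pow_le_one₀ (norm_nonneg z) hz
    _ = 2 / ‖1 - z‖ := by norm_num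

lemma cauchySeq_sum_range_pow_div {z : ℂ} (hz : ‖z‖ ≤ 1) (hz1 : z ≠ 1) :
    CauchySeq fun n ↦ ∑ i ∈ range n, z ^ i / i := by
  have hanti : Antitone fun n : ℕ ↦ ((n : ℝ) + 1)⁻¹ := fun a b hab ↦
    inv_anti₀ (by positivity) (by gcongr)
  have hdir := hanti.cauchySeq_series_mul_of_tendsto_zero_of_bounded
    (tendsto_one_div_add_atTop_nhds_zero_nat.congr fun n ↦ one_div _)
    (norm_sum_range_pow_succ_le hz hz1)
  rw [← cauchySeq_shift 1]
  convert hdir using 2 with n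
  rw [sum_range_succ', Nat.cast_zero, div_zero, add_zero]
  refine sum_congr rfl fun i _ ↦ ?_
  rw [real_smul, div_eq_inv_mul]
  push_cast
  rfl

theorem tendsto_sum_range_pow_div {z : ℂ} (hz : ‖z‖ ≤ 1) (hz1 : z ≠ 1) :
    Tendsto (fun n ↦ ∑ i ∈ range n, z ^ i / i) atTop (𝓝 (-log (1 - z))) := by
  obtain ⟨l, hl⟩ := cauchySeq_tendsto_of_complete (cauchySeq_sum_range_pow_div hz hz1)
  have habel := tendsto_tsum_powerSeries_nhdsWithin_lt hl
  have hlog : Tendsto (fun w : ℂ ↦ -log (1 - w * z)) ((𝓝[<] 1).map ofReal)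
      (𝓝 (-log (1 - z))) := by
    have hcont : ContinuousAt (fun w : ℂ ↦ -log (1 - w * z)) 1 := by
      have hlog1 : ContinuousAt log (1 - 1 * z) := by
        simpa using continuousAt_clog (one_sub_mem_slitPlane hz hz1)
      exact (hlog1.comp (f := fun w : ℂ ↦ 1 - w * z) (by fun_prop)).neg
    simpa using hcont.tendsto.mono_left
      ((map_mono nhdsWithin_le_nhds).trans (continuous_ofReal.tendsto 1))
  have htaylor : (fun w : ℂ ↦ ∑' n : ℕ, z ^ n / n * w ^ n) =ᶠ[(𝓝[<] 1).map ofReal]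
      fun w ↦ -log (1 - w * z) := by
    rw [EventuallyEq, eventually_map]
    filter_upwards [Ioo_mem_nhdsLT zero_lt_one] with r hr
    have hrz : ‖(r : ℂ) * z‖ < 1 := by
      rw [norm_mul, norm_real, Real.norm_of_nonneg hr.1.le]
      exact (mul_le_of_le_one_right hr.1.le hz).trans_lt hr.2
    rw [← (hasSum_taylorSeries_neg_log hrz).tsum_eq]
    simp_rw [mul_pow, div_mul_eq_mul_div, mul_comm]
  rwa [tendsto_nhds_unique (habel.congr' htaylor) hlog] at hl

lemma one_sub_exp_mul_I (x : ℝ) :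
    1 - exp (x * I) = (2 * Real.sin (x / 2) : ℝ) * exp (((x - π) / 2 : ℝ) * I) := by
  have hsplit : ((x - π) / 2 : ℝ) * I = (x / 2 : ℝ) * I + -(π / 2 * I) := by push_cast; ring
  have hsq : exp (x * I) = exp ((x / 2 : ℝ) * I) ^ 2 := by
    rw [← exp_nat_mul]; push_cast; ring_nf
  have hinv : exp (-((x / 2 : ℝ) * I)) * exp ((x / 2 : ℝ) * I) = 1 := by
    rw [← exp_add, neg_add_cancel, exp_zero]
  rw [hsplit, exp_add, ofReal_mul, ofReal_ofNat, ofReal_sin, Complex.sin, exp_neg (π / 2 * I),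
    exp_pi_div_two_mul_I, inv_I, neg_mul, hsq]
  set w := exp ((x / 2 : ℝ) * I)
  linear_combination -hinv + (exp (-((x / 2 : ℝ) * I)) * w - w ^ 2) * I_sq

lemma exp_mul_I_ne_one {x : ℝ} (hx : x ∈ Set.Ioo 0 (2 * π)) : exp (x * I) ≠ 1 := by
  refine (sub_ne_zero.1 ?_).symm
  rw [one_sub_exp_mul_I]
  exact mul_ne_zero (ofReal_ne_zero.2 (by linarith [Real.sin_half_pos hx])) (exp_ne_zero _)

lemma arg_one_sub_exp_mul_I {x : ℝ} (hx : x ∈ Set.Ioo 0 (2 * π)) :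
    arg (1 - exp (x * I)) = (x - π) / 2 := by
  rw [one_sub_exp_mul_I, arg_real_mul _ (by linarith [Real.sin_half_pos hx]), exp_mul_I,
    arg_cos_add_sin_mul_I ⟨by linarith [hx.1, Real.pi_pos], by linarith [hx.2, Real.pi_pos]⟩]

lemma im_exp_mul_I_pow_div (x : ℝ) (j : ℕ) :
    (exp (x * I) ^ j / j).im = Real.sin (j * x) / j := by
  rw [← exp_nat_mul, div_natCast_im, ← mul_assoc, ← ofReal_natCast, ← ofReal_mul,
    exp_ofReal_mul_I_im]

end Complex

theorem sin_series_eq (x : ℝ) (hx : x ∈ Set.Ioo (0:ℝ) (2 * Real.pi)) :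
    Tendsto (fun N : ℕ => ∑ j ∈ Finset.Icc 1 N, Real.sin (j * x) / j)
      atTop (nhds ((Real.pi - x) / 2)) := by
  set z := Complex.exp (x * Complex.I)
  have hpartial (N : ℕ) :
      ∑ j ∈ Icc 1 N, Real.sin (j * x) / j = (∑ j ∈ range (N + 1), z ^ j / j).im := by
    rw [Complex.im_sum, range_eq_Ico, sum_eq_sum_Ico_succ_bot N.succ_pos, zero_add,
      Nat.succ_eq_add_one, Ico_add_one_right_eq_Icc, Nat.cast_zero, div_zero, Complex.zero_im,
      zero_add]
    exact sum_congr rfl fun j _ ↦ (Complex.im_exp_mul_I_pow_div x j).symm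
  have hlim : (-Complex.log (1 - z)).im = (π - x) / 2 := by
    rw [Complex.neg_im, Complex.log_im, Complex.arg_one_sub_exp_mul_I hx]
    ring
  have hz : ‖z‖ ≤ 1 := (Complex.norm_exp_ofReal_mul_I x).le
  simpa only [hpartial, hlim, Function.comp_def] using (Complex.continuous_im.tendsto _).comp
    ((Complex.tendsto_sum_range_pow_div hz (Complex.exp_mul_I_ne_one hx)).comp
      (tendsto_add_atTop_nat 1))
end

section
/- Let β ∈ ℝ and let g : ℝ → [0,∞) be continuous and 2π-periodic. On a probability space carrying i.i.d. standard complex Gaussians (Z_j)_{j≥1}, define Y_k = ∫_0^{2π} g(θ) e^{β X_k(θ) − (β²/2) E[X_k(θ)²]} dθ for k ≥ 1. Then the sequence (Y_k)_{k≥1} converges almost surely as k → ∞. -/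
/-! For fixed `θ`, the normalised exponential `exp (β X_k(θ) - β² E[X_k(θ)²] / 2)` is the
product over `j ≤ k` of the independent factors `exp (β Re (Z_j e^{ijθ}) / √j - β² / (4j))`,
each of mean one because `Re (Z e^{iφ})` is a centred Gaussian of variance `1/2`. Hence it is
a nonnegative martingale in the natural filtration of `(Z_j)`, and by Fubini so is `Y_k`.
A nonnegative martingale is bounded in `L¹` by its (constant) expectation, so the martingale
convergence theorem applies. -/

open MeasureTheory Filter Finset

noncomputable section

/-- `ee x = exp(i x)`. -/
def ee (x : ℝ) : ℂ := Complex.exp (Complex.I * x)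

/-- The law of a standard complex Gaussian `Z = A + iB`, with `A, B` independent
real centered Gaussians of variance `1/2`. -/
def stdComplexGaussian : Measure ℂ :=
  Measure.map (fun p : ℝ × ℝ => (p.1 : ℂ) + p.2 * Complex.I)
    ((ProbabilityTheory.gaussianReal 0 (1/2)).prod (ProbabilityTheory.gaussianReal 0 (1/2)))

/-- The truncated field `X_k(θ)` built from the sequence `Z`. -/
def XfieldSeq {Ω : Type*} (Z : ℕ → Ω → ℂ) (k : ℕ) (θ : ℝ) (ω : Ω) : ℝ :=
  ((1/2 : ℂ) * ∑ j ∈ Finset.Icc 1 k, (1 / (Real.sqrt j : ℂ)) *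
      (Z j ω * ee (j * θ) + (starRingEnd ℂ) (Z j ω) * ee (-(j * θ)))).re

/-- `Y_k = ∫_0^{2π} g(θ) e^{β X_k(θ) - (β²/2) E[X_k(θ)²]} dθ`. -/
def Yseq {Ω : Type*} (β : ℝ) (g : ℝ → ℝ) (Z : ℕ → Ω → ℂ) (k : ℕ) (ω : Ω) : ℝ :=
  ∫ θ in (0:ℝ)..(2 * Real.pi),
    g θ * Real.exp (β * XfieldSeq Z k θ ω -
      (β ^ 2 / 2) * ((1/2) * ∑ j ∈ Finset.Icc 1 k, (1 : ℝ) / j))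

open ProbabilityTheory Complex Topology

section Martingale

variable {Ω : Type*} {mΩ : MeasurableSpace Ω} {P : Measure Ω}

theorem MeasureTheory.Martingale.integral_eq_of_le {ι E : Type*} [NormedAddCommGroup E]
    [NormedSpace ℝ E] [CompleteSpace E] [IsFiniteMeasure P] [Preorder ι] {ℱ : Filtration ι mΩ}
    {f : ι → Ω → E} (hf : Martingale f ℱ P) {i j : ι} (hij : i ≤ j) :
    ∫ ω, f i ω ∂P = ∫ ω, f j ω ∂P := by
  simpa using hf.setIntegral_eq hij MeasurableSet.univ

theorem MeasureTheory.Martingale.exists_ae_tendsto_of_nonneg [IsFiniteMeasure P]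
    {ℱ : Filtration ℕ mΩ} {f : ℕ → Ω → ℝ} (hf : Martingale f ℱ P) (hnonneg : ∀ n ω, 0 ≤ f n ω) :
    ∀ᵐ ω ∂P, ∃ c, Tendsto (fun n => f n ω) atTop (𝓝 c) := by
  refine hf.submartingale.exists_ae_tendsto_of_bdd
    (R := (ENNReal.ofReal (∫ ω, f 0 ω ∂P)).toNNReal) fun n => le_of_eq ?_
  rw [ENNReal.coe_toNNReal ENNReal.ofReal_ne_top, eLpNorm_one_eq_lintegral_enorm,
    ← ofReal_integral_norm_eq_lintegral_enorm (hf.integrable n)]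
  simp_rw [Real.norm_of_nonneg (hnonneg n _), hf.integral_eq_of_le (Nat.zero_le n)]

theorem martingale_prod_Icc_of_iIndepFun {E : Type*} [NormedAddCommGroup E] [MeasurableSpace E]
    [BorelSpace E] {Z : ℕ → Ω → E} (hZ : ∀ j, StronglyMeasurable (Z j))
    (hindep : iIndepFun Z P) {f : ℕ → E → ℝ} (hf : ∀ j, Measurable (f j))
    (hint : ∀ j, Integrable (fun ω => f j (Z j ω)) P)
    (hmean : ∀ j, 1 ≤ j → ∫ ω, f j (Z j ω) ∂P = 1) :
    Martingale (fun k ω => ∏ j ∈ Icc 1 k, f j (Z j ω)) (Filtration.natural Z hZ) P := by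
  have := hindep.isProbabilityMeasure
  set ℱ := Filtration.natural Z hZ
  set M : ℕ → Ω → ℝ := fun k ω => ∏ j ∈ Icc 1 k, f j (Z j ω)
  set ξ : ℕ → Ω → ℝ := fun j ω => f j (Z j ω)
  have hadapted : StronglyAdapted ℱ M := fun k =>
    (measurable_prod _ fun j hj => (hf j).comp
      ((Filtration.stronglyAdapted_natural hZ j).mono
        (ℱ.mono (mem_Icc.mp hj).2)).measurable).stronglyMeasurable
  have hsucc : ∀ k, M (k + 1) = M k * ξ (k + 1) := fun k => by
    ext ω
    exact prod_Icc_succ_top (Nat.le_add_left 1 k) _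
  have hξ_meas : ∀ j, StronglyMeasurable[MeasurableSpace.comap (Z j) inferInstance] (ξ j) :=
    fun j => ((hf j).comp (comap_measurable (Z j))).stronglyMeasurable
  have hξ_indep : ∀ k, Indep (MeasurableSpace.comap (Z (k + 1)) inferInstance) (ℱ k) P :=
    fun k => hindep.indep_comap_natural_of_lt hZ k.lt_succ_self
  have hM_int : ∀ k, Integrable (M k) P := by
    intro k
    induction k with
    | zero => simp [M]
    | succ k ih =>
      have hMξ : IndepFun (M k) (ξ (k + 1)) P := by
        rw [IndepFun_iff_Indep]
        exact indep_of_indep_of_le_right (indep_of_indep_of_le_left (hξ_indep k).symm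
          (hadapted k).measurable.comap_le) (hξ_meas (k + 1)).measurable.comap_le
      rw [hsucc]
      exact hMξ.integrable_mul ih (hint (k + 1))
  refine martingale_nat hadapted hM_int fun k => ?_
  have hξ_condExp : P[ξ (k + 1) | ℱ k] =ᵐ[P] fun _ => 1 := by
    rw [← hmean (k + 1) (Nat.le_add_left 1 k)]
    exact condExp_indep_eq ((hZ _).measurable.comap_le) (ℱ.le k) (hξ_meas (k + 1)) (hξ_indep k)
  rw [hsucc]
  filter_upwards [condExp_mul_of_stronglyMeasurable_left (hadapted k) (hsucc k ▸ hM_int (k + 1))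
    (hint (k + 1)), hξ_condExp] with ω hpull hconst
  rw [hpull, Pi.mul_apply, hconst, mul_one]

lemma integrable_prod_mul_of_integral_eq_one {T : Type*} {mT : MeasurableSpace T} {ν : Measure T}
    [SFinite P] {g : T → ℝ} (hg : Integrable g ν) {M : T → Ω → ℝ}
    (hM : AEStronglyMeasurable (Function.uncurry M) (ν.prod P))
    (hM_nonneg : ∀ θ ω, 0 ≤ M θ ω) (hM_int : ∀ θ, Integrable (M θ) P)
    (hM_mean : ∀ θ, ∫ ω, M θ ω ∂P = 1) :
    Integrable (Function.uncurry fun θ ω => g θ * M θ ω) (ν.prod P) := by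
  refine (integrable_prod_iff (f := Function.uncurry fun θ ω => g θ * M θ ω)
    (hg.1.comp_fst.mul hM)).2
    ⟨ae_of_all _ fun θ => (hM_int θ).const_mul (g θ), hg.norm.congr (ae_of_all _ fun θ => ?_)⟩
  simp only [Function.uncurry_apply_pair, norm_mul, Real.norm_of_nonneg (hM_nonneg θ _),
    integral_const_mul, hM_mean, mul_one]

section ParametricIntegral

variable {T ι : Type*} [TopologicalSpace T] [TopologicalSpace.MetrizableSpace T]
  [SecondCountableTopology T] [MeasurableSpace T] [OpensMeasurableSpace T] {ν : Measure T}
  [SFinite ν] [IsFiniteMeasure P] [Preorder ι] {ℱ : Filtration ι mΩ}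

theorem martingale_integral_of_forall_martingale {F : ι → T → Ω → ℝ}
    (hmart : ∀ θ, Martingale (fun i => F i θ) ℱ P)
    (hcont : ∀ i ω, Continuous fun θ => F i θ ω)
    (hint : ∀ i, Integrable (Function.uncurry (F i)) (ν.prod P)) :
    Martingale (fun i ω => ∫ θ, F i θ ω ∂ν) ℱ P := by
  have hadapted : StronglyAdapted ℱ fun i ω => ∫ θ, F i θ ω ∂ν := fun i =>
    @StronglyMeasurable.integral_prod_left T Ω ℝ _ (ℱ i) ν _ _ _ (F i)
      (measurable_uncurry_of_continuous_of_measurable (m := ℱ i) (hcont i)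
        fun θ => ((hmart θ).stronglyMeasurable i).measurable).stronglyMeasurable
  have hswap : ∀ i s, ∫ ω in s, ∫ θ, F i θ ω ∂ν ∂P = ∫ θ, ∫ ω in s, F i θ ω ∂P ∂ν := fun i s =>
    (integral_integral_swap ((hint i).mono_measure (Measure.prod_mono le_rfl
      Measure.restrict_le_self))).symm
  refine ⟨hadapted, fun i j hij => ae_eq_condExp_of_forall_setIntegral_eq (ℱ.le i)
    (hint j).integral_prod_right (fun s _ _ => (hint i).integral_prod_right.integrableOn)
    (fun s hs _ => ?_) (hadapted i).aestronglyMeasurable |>.symm⟩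
  simp only [Function.uncurry_apply_pair, hswap, fun θ => (hmart θ).setIntegral_eq hij hs]

theorem martingale_integral_mul_of_forall_martingale {g : T → ℝ} (hg : Continuous g)
    (hg_int : Integrable g ν) {M : ι → T → Ω → ℝ} (hM : ∀ θ, Martingale (fun i => M i θ) ℱ P)
    (hM_cont : ∀ i ω, Continuous fun θ => M i θ ω) (hM_nonneg : ∀ i θ ω, 0 ≤ M i θ ω)
    (hM_mean : ∀ i θ, ∫ ω, M i θ ω ∂P = 1) :
    Martingale (fun i ω => ∫ θ, g θ * M i θ ω ∂ν) ℱ P :=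
  martingale_integral_of_forall_martingale (fun θ => (hM θ).smul (g θ))
    (fun i ω => hg.mul (hM_cont i ω)) fun i =>
      integrable_prod_mul_of_integral_eq_one hg_int
        (measurable_uncurry_of_continuous_of_measurable (hM_cont i) fun θ =>
          ((hM θ).stronglyMeasurable i).measurable.mono (ℱ.le i) le_rfl).aestronglyMeasurable
        (hM_nonneg i) (fun θ => (hM θ).integrable i) (hM_mean i)

end ParametricIntegral

end Martingale

lemma integral_exp_mul_gaussianReal (μ : ℝ) (v : NNReal) (t : ℝ) :
    ∫ x, Real.exp (t * x) ∂gaussianReal μ v = Real.exp (μ * t + v * t ^ 2 / 2) :=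
  congrFun mgf_id_gaussianReal t

lemma exp_mul_re_ofReal_add_mul_I (t a b : ℝ) (w : ℂ) :
    Real.exp (t * (((a : ℂ) + b * I) * w).re)
      = Real.exp (t * w.re * a) * Real.exp (-(t * w.im) * b) := by
  rw [← Real.exp_add]
  congr 1
  simp only [mul_re, add_re, ofReal_re, mul_im, I_re, I_im, ofReal_im, add_im]
  ring

lemma measurable_ofReal_add_mul_I : Measurable fun p : ℝ × ℝ => (p.1 : ℂ) + p.2 * I := by
  fun_prop

lemma integrable_exp_mul_re_stdComplexGaussian (t : ℝ) (w : ℂ) :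
    Integrable (fun z : ℂ => Real.exp (t * (z * w).re)) stdComplexGaussian := by
  rw [stdComplexGaussian, integrable_map_measure (by fun_prop)
    measurable_ofReal_add_mul_I.aemeasurable]
  simp only [Function.comp_def, exp_mul_re_ofReal_add_mul_I]
  exact (integrable_exp_mul_gaussianReal _).mul_prod (integrable_exp_mul_gaussianReal _)

lemma integral_exp_mul_re_stdComplexGaussian (t : ℝ) (w : ℂ) :
    ∫ z : ℂ, Real.exp (t * (z * w).re) ∂stdComplexGaussian = Real.exp (t ^ 2 * ‖w‖ ^ 2 / 4) := by
  rw [stdComplexGaussian, integral_map measurable_ofReal_add_mul_I.aemeasurable (by fun_prop)]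
  simp only [exp_mul_re_ofReal_add_mul_I]
  rw [integral_prod_mul (fun a => Real.exp (t * w.re * a)) (fun b => Real.exp (-(t * w.im) * b)),
    integral_exp_mul_gaussianReal, integral_exp_mul_gaussianReal, ← Real.exp_add,
    ← normSq_eq_norm_sq, normSq_apply]
  congr 1
  push_cast
  ring

lemma ee_neg (x : ℝ) : ee (-x) = (starRingEnd ℂ) (ee x) := by
  simp only [ee, ← exp_conj, map_mul, conj_I, conj_ofReal, ofReal_neg]
  ring_nf

lemma norm_ee (x : ℝ) : ‖ee x‖ = 1 := by
  simp [ee, norm_exp]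

lemma XfieldSeq_eq_sum {Ω : Type*} (Z : ℕ → Ω → ℂ) (k : ℕ) (θ : ℝ) (ω : Ω) :
    XfieldSeq Z k θ ω = ∑ j ∈ Icc 1 k, (Z j ω * ee (j * θ)).re / Real.sqrt j := by
  have hterm : ∀ j : ℕ, Z j ω * ee (j * θ) + (starRingEnd ℂ) (Z j ω) * ee (-(j * θ))
      = (2 * (Z j ω * ee (j * θ)).re : ℝ) := fun j => by
    rw [ee_neg, ← map_mul, add_conj]
  simp only [XfieldSeq, hterm, mul_sum, re_sum]
  refine sum_congr rfl fun j _ => ?_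
  rw [show (1 / 2 : ℂ) * (1 / (Real.sqrt j : ℂ) * ((2 * (Z j ω * ee (j * θ)).re : ℝ) : ℂ))
      = (((Z j ω * ee (j * θ)).re / Real.sqrt j : ℝ) : ℂ) by push_cast; ring, ofReal_re]

def expFactor (β : ℝ) (j : ℕ) (θ : ℝ) (z : ℂ) : ℝ :=
  Real.exp (β / Real.sqrt j * (z * ee (j * θ)).re - β ^ 2 / (4 * j))

lemma continuous_expFactor (β : ℝ) (j : ℕ) (θ : ℝ) : Continuous (expFactor β j θ) := by
  unfold expFactor ee
  fun_prop

lemma continuous_expFactor_angle (β : ℝ) (j : ℕ) (z : ℂ) :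
    Continuous fun θ => expFactor β j θ z := by
  unfold expFactor ee
  fun_prop

lemma integrable_expFactor (β : ℝ) (j : ℕ) (θ : ℝ) :
    Integrable (expFactor β j θ) stdComplexGaussian := by
  unfold expFactor
  simp only [Real.exp_sub]
  exact (integrable_exp_mul_re_stdComplexGaussian _ _).div_const _

lemma integral_expFactor (β : ℝ) {j : ℕ} (hj : 1 ≤ j) (θ : ℝ) :
    ∫ z, expFactor β j θ z ∂stdComplexGaussian = 1 := by
  have hj_pos : (0 : ℝ) < j := by exact_mod_cast hj
  simp only [expFactor, Real.exp_sub]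
  rw [integral_div, integral_exp_mul_re_stdComplexGaussian, norm_ee, div_pow,
    Real.sq_sqrt hj_pos.le, div_eq_one_iff_eq (Real.exp_pos _).ne']
  congr 1
  ring

lemma exp_XfieldSeq_eq_prod {Ω : Type*} (β : ℝ) (Z : ℕ → Ω → ℂ) (k : ℕ) (θ : ℝ) (ω : Ω) :
    Real.exp (β * XfieldSeq Z k θ ω - (β ^ 2 / 2) * ((1/2) * ∑ j ∈ Icc 1 k, (1 : ℝ) / j))
      = ∏ j ∈ Icc 1 k, expFactor β j θ (Z j ω) := by
  simp only [expFactor]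
  rw [← Real.exp_sum, sum_sub_distrib, XfieldSeq_eq_sum, mul_sum, mul_sum, mul_sum]
  congr 1
  congr 1 <;> refine sum_congr rfl fun j _ => by ring

lemma Yseq_eq_setIntegral {Ω : Type*} (β : ℝ) (g : ℝ → ℝ) (Z : ℕ → Ω → ℂ) (k : ℕ) (ω : Ω) :
    Yseq β g Z k ω
      = ∫ θ in Set.Ioc 0 (2 * Real.pi), g θ * ∏ j ∈ Icc 1 k, expFactor β j θ (Z j ω) := by
  simp only [Yseq, exp_XfieldSeq_eq_prod]
  exact intervalIntegral.integral_of_le Real.two_pi_pos.le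

theorem gmc_partial_sums_converge_ae_general {Ω : Type*} [MeasurableSpace Ω]
    (P : Measure Ω) [IsProbabilityMeasure P]
    (Z : ℕ → Ω → ℂ) (hmeas : ∀ j, Measurable (Z j))
    (hindep : ProbabilityTheory.iIndepFun Z P)
    (hlaw : ∀ j, Measure.map (Z j) P = stdComplexGaussian)
    (β : ℝ) (g : ℝ → ℝ) (hgc : Continuous g)
    (hgpos : ∀ x, 0 ≤ g x) :
    ∀ᵐ ω ∂P, ∃ l : ℝ, Tendsto (fun k : ℕ => Yseq β g Z k ω) atTop (nhds l) := by
  have hZ : ∀ j, StronglyMeasurable (Z j) := fun j => (hmeas j).stronglyMeasurable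
  set M : ℕ → ℝ → Ω → ℝ := fun k θ ω => ∏ j ∈ Icc 1 k, expFactor β j θ (Z j ω)
  have hM : ∀ θ, Martingale (fun k => M k θ) (Filtration.natural Z hZ) P := fun θ =>
    martingale_prod_Icc_of_iIndepFun hZ hindep (fun j => (continuous_expFactor β j θ).measurable)
      (fun j => (hlaw j ▸ integrable_expFactor β j θ).comp_measurable (hmeas j))
      fun j hj => by
        rw [← integral_expFactor β hj θ, ← hlaw j, integral_map (hmeas j).aemeasurable
          (continuous_expFactor β j θ).aestronglyMeasurable]
  have hY : Martingale (fun k => Yseq β g Z k) (Filtration.natural Z hZ) P := by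
    convert martingale_integral_mul_of_forall_martingale
      (ν := volume.restrict (Set.Ioc 0 (2 * Real.pi))) hgc hgc.integrableOn_Ioc hM
      (fun k ω => continuous_finsetProd _ fun j _ => continuous_expFactor_angle β j (Z j ω))
      (fun k θ ω => prod_nonneg fun j _ => (Real.exp_pos _).le)
      (fun k θ => ((hM θ).integral_eq_of_le (Nat.zero_le k)).symm.trans (by simp [M])) using 1
    ext k ω
    exact Yseq_eq_setIntegral β g Z k ω
  exact hY.exists_ae_tendsto_of_nonneg fun k ω =>
    intervalIntegral.integral_nonneg Real.two_pi_pos.le fun θ _ =>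
      mul_nonneg (hgpos θ) (Real.exp_pos _).le

theorem gmc_partial_sums_converge_ae {Ω : Type*} [MeasurableSpace Ω]
    (P : Measure Ω) [IsProbabilityMeasure P]
    (Z : ℕ → Ω → ℂ) (hmeas : ∀ j, Measurable (Z j))
    (hindep : ProbabilityTheory.iIndepFun Z P)
    (hlaw : ∀ j, Measure.map (Z j) P = stdComplexGaussian)
    (β : ℝ) (g : ℝ → ℝ) (hgc : Continuous g)
    (hgper : Function.Periodic g (2 * Real.pi)) (hgpos : ∀ x, 0 ≤ g x) :
    ∀ᵐ ω ∂P, ∃ l : ℝ, Tendsto (fun k : ℕ => Yseq β g Z k ω) atTop (nhds l) :=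
  gmc_partial_sums_converge_ae_general P Z hmeas hindep hlaw β g hgc hgpos

end
end
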